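/- Let N ≥ 1, fix a qubit index j ∈ Fin N, and let ρ be any complex matrix indexed by (Fin N → Fin 2). Define the reduced single-qubit matrix ρ^{(j)} as the 2×2 matrix with entries ρ^{(j)}(a,a') = Σ_{x : Fin N → Fin 2 with x(j) = a} ρ(x, update(x, j, a')), where update(x, j, a') changes the j-th coordinate of x to a'. Then the Born-weighted average of the local inverse snapshots at qubit j equals the reduced state: (1/3^N) · Σ_{P : Fin N → {X,Y,Z}} Σ_{b : Fin N → {0,1}} w_ρ(P,b) · (3·|e(P_j,b_j)⟩⟨e(P_j,b_j)| − I₂) = ρ^{(j)}. (Unbiasedness of the local shadow features used as inputs for direct fidelity estimation.) -/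

import Mathlib

open Matrix BigOperators

noncomputable section

/-- The eigenvectors `e(P,s)` of the Pauli matrices, with the index `0 ↦ X`, `1 ↦ Y`, `2 ↦ Z`. -/
def evec : Fin 3 → Fin 2 → Fin 2 → ℂ
  | 0, s => fun a => (1 / (Real.sqrt 2 : ℂ)) * (if a = 1 then (-1 : ℂ) ^ (s : ℕ) else 1)
  | 1, s => fun a => (1 / (Real.sqrt 2 : ℂ)) * (if a = 1 then (-1 : ℂ) ^ (s : ℕ) * Complex.I else 1)
  | 2, s => fun a => if a = s then 1 else 0

/-- The outer product `|v⟩⟨v|`, with entries `v a * conj (v b)`. -/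
def outer {n : Type*} (v : n → ℂ) : Matrix n n ℂ :=
  Matrix.of fun a b => v a * (starRingEnd ℂ) (v b)

/-- The product basis vector `e(P,b)` with entries `∏_j e(P_j,b_j)(x_j)`. -/
def pvec {N : ℕ} (P : Fin N → Fin 3) (b : Fin N → Fin 2) : (Fin N → Fin 2) → ℂ :=
  fun x => ∏ j, evec (P j) (b j) (x j)

/-- The Born-rule outcome weight `w_ρ(P,b) = ⟨e(P,b)|ρ|e(P,b)⟩`. -/
def wgt {N : ℕ} (ρ : Matrix (Fin N → Fin 2) (Fin N → Fin 2) ℂ)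
    (P : Fin N → Fin 3) (b : Fin N → Fin 2) : ℂ :=
  ∑ x, ∑ y, (starRingEnd ℂ) (pvec P b x) * ρ x y * pvec P b y

/-- The reduced single-qubit matrix of `ρ` at qubit `j` (the partial trace over the other
qubits): `ρ^{(j)}(a,a') = Σ_{x : x(j) = a} ρ(x, update(x,j,a'))`. -/
def reduced {N : ℕ} (ρ : Matrix (Fin N → Fin 2) (Fin N → Fin 2) ℂ) (j : Fin N) :
    Matrix (Fin 2) (Fin 2) ℂ :=
  Matrix.of fun a a' =>
    ∑ x ∈ Finset.univ.filter (fun x : Fin N → Fin 2 => x j = a),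
      ρ x (Function.update x j a')

/-!
The snapshot sum factorizes over the qubits. Away from `j`, each Pauli basis is orthonormal,
so the three bases together contribute `3 δ(x_k, y_k)`; at `j`, the six eigenvectors form a
2-design, `Σ |e⟩⟨e| ⊗ |e⟩⟨e| = 1 + SWAP`, and `3 |e⟩⟨e| - 1` inverts the measurement channel,
leaving `3 δ(x_j, a) δ(y_j, a')`. Hence the averaged snapshot picks out exactly the entries
`ρ(x, update x j a')` with `x j = a`, which is the reduced state.
-/

lemma Fintype.sum_pi_sum_pi_prod {ι α β M : Type*} [Fintype ι] [DecidableEq ι] [Fintype α]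
    [Fintype β] [CommSemiring M] (H : ι → α → β → M) :
    ∑ P : ι → α, ∑ b : ι → β, ∏ k, H k (P k) (b k) = ∏ k, ∑ p, ∑ s, H k p s := by
  simp only [Fintype.prod_sum]

lemma prod_ite_delta_eq_update {ι α R : Type*} [Fintype ι] [DecidableEq ι] [DecidableEq α]
    [CommMonoidWithZero R] (j : ι) (x y : ι → α) (a a' : α) :
    ∏ k, (if k = j then (if x k = a ∧ y k = a' then 1 else 0)
      else (if x k = y k then 1 else 0) : R)
      = if x j = a ∧ y = Function.update x j a' then 1 else 0 := by
  rw [Fintype.prod_eq_mul_prod_compl j, if_pos rfl,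
    Finset.prod_congr rfl fun k hk => if_neg (by simpa using hk),
    Finset.prod_boole, ite_zero_mul_ite_zero, one_mul]
  congr 1
  simp only [Function.eq_update_iff, Finset.mem_compl, Finset.mem_singleton, eq_iff_iff]
  constructor
  · rintro ⟨⟨hx, hy⟩, hrest⟩
    exact ⟨hx, hy, fun k hk => (hrest k hk).symm⟩
  · rintro ⟨hx, hy, hrest⟩
    exact ⟨⟨hx, hy⟩, fun k hk => (hrest k hk).symm⟩

lemma Finset.sum_sum_comm_sum_sum {α β γ δ M : Type*} [Fintype α] [Fintype β] [Fintype γ]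
    [Fintype δ] [AddCommMonoid M] (f : α → β → γ → δ → M) :
    ∑ p, ∑ b, ∑ x, ∑ y, f p b x y = ∑ x, ∑ y, ∑ p, ∑ b, f p b x y := by
  simp_rw [Finset.sum_comm (s := (Finset.univ : Finset β)),
    Finset.sum_comm (s := (Finset.univ : Finset α))]

lemma evec_completeness (p : Fin 3) (x y : Fin 2) :
    ∑ s : Fin 2, (starRingEnd ℂ) (evec p s x) * evec p s y = if x = y then 1 else 0 := by
  have h : ((Real.sqrt 2 : ℝ) : ℂ) ^ 2 = 2 := by norm_cast; simp
  fin_cases p <;> fin_cases x <;> fin_cases y <;>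
    simp [evec, Fin.sum_univ_two, Complex.conj_ofReal] <;> field_simp <;> ring_nf <;> norm_num [h]

lemma evec_second_moment (x y a a' : Fin 2) :
    ∑ p : Fin 3, ∑ s : Fin 2,
      (starRingEnd ℂ) (evec p s x) * evec p s y * (evec p s a * (starRingEnd ℂ) (evec p s a'))
      = (if x = y then 1 else 0) * (if a = a' then 1 else 0)
        + (if x = a then 1 else 0) * (if y = a' then 1 else 0) := by
  have h : ((Real.sqrt 2 : ℝ) : ℂ) ^ 4 = 4 := by
    rw [show 4 = 2 * 2 from rfl, pow_mul]; norm_cast; simp; norm_num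
  fin_cases x <;> fin_cases y <;> fin_cases a <;> fin_cases a' <;>
    simp [evec, Fin.sum_univ_three, Fin.sum_univ_two, Complex.conj_ofReal] <;> field_simp <;>
    ring_nf <;> norm_num [h]

def snapshot (p : Fin 3) (s : Fin 2) : Matrix (Fin 2) (Fin 2) ℂ :=
  (3 : ℂ) • outer (evec p s) - 1

lemma sum_evec_mul_snapshot (x y a a' : Fin 2) :
    ∑ p : Fin 3, ∑ s : Fin 2, (starRingEnd ℂ) (evec p s x) * evec p s y * snapshot p s a a'
      = 3 * if x = a ∧ y = a' then 1 else 0 := by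
  have expand : ∀ p s, (starRingEnd ℂ) (evec p s x) * evec p s y * snapshot p s a a'
      = 3 * ((starRingEnd ℂ) (evec p s x) * evec p s y *
          (evec p s a * (starRingEnd ℂ) (evec p s a')))
        - (if a = a' then 1 else 0) * ((starRingEnd ℂ) (evec p s x) * evec p s y) := by
    intro p s
    simp only [snapshot, outer, Matrix.sub_apply, Matrix.smul_apply, of_apply, one_apply,
      smul_eq_mul]
    ring
  simp only [expand, Finset.sum_sub_distrib, ← Finset.mul_sum, evec_second_moment,
    evec_completeness, Finset.sum_const, Finset.card_univ, Fintype.card_fin]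
  split_ifs <;> grind

lemma sum_conj_pvec_mul_pvec_mul_snapshot {N : ℕ} (j : Fin N) (x y : Fin N → Fin 2)
    (a a' : Fin 2) :
    ∑ P : Fin N → Fin 3, ∑ b : Fin N → Fin 2,
      (starRingEnd ℂ) (pvec P b x) * pvec P b y * snapshot (P j) (b j) a a'
      = 3 ^ N * if x j = a ∧ y = Function.update x j a' then 1 else 0 := by
  set H : Fin N → Fin 3 → Fin 2 → ℂ := fun k p s =>
    (starRingEnd ℂ) (evec p s (x k)) * evec p s (y k) * if k = j then snapshot p s a a' else 1
  have factor : ∀ P b, (starRingEnd ℂ) (pvec P b x) * pvec P b y * snapshot (P j) (b j) a a'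
      = ∏ k, H k (P k) (b k) := by
    intro P b
    simp only [H, pvec, map_prod, Finset.prod_mul_distrib,
      Fintype.prod_ite_eq' j fun k => snapshot (P k) (b k) a a']
  have local_sum : ∀ k, ∑ p, ∑ s, H k p s
      = 3 * if k = j then (if x k = a ∧ y k = a' then 1 else 0)
        else (if x k = y k then 1 else 0) := by
    intro k
    by_cases hk : k = j
    · simp only [H, hk, if_true, sum_evec_mul_snapshot]
    · simp only [H, hk, if_false, mul_one, evec_completeness, Finset.sum_const, Finset.card_univ,
        Fintype.card_fin, nsmul_eq_mul, Nat.cast_ofNat]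
  simp only [factor, Fintype.sum_pi_sum_pi_prod, local_sum, Finset.prod_mul_distrib,
    Finset.prod_const, Finset.card_univ, Fintype.card_fin, prod_ite_delta_eq_update]

theorem local_shadow_unbiased_general {N : ℕ} (j : Fin N)
    (ρ : Matrix (Fin N → Fin 2) (Fin N → Fin 2) ℂ) :
    (1 / 3 ^ N : ℂ) • ∑ P : Fin N → Fin 3, ∑ b : Fin N → Fin 2,
      wgt ρ P b • ((3 : ℂ) • outer (evec (P j) (b j)) - 1) = reduced ρ j := by
  ext a a'
  have entry : ∀ x y, ∑ P : Fin N → Fin 3, ∑ b : Fin N → Fin 2,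
      (starRingEnd ℂ) (pvec P b x) * ρ x y * pvec P b y * snapshot (P j) (b j) a a'
      = 3 ^ N * (ρ x y * if x j = a ∧ y = Function.update x j a' then 1 else 0) := by
    intro x y
    rw [mul_left_comm, ← sum_conj_pvec_mul_pvec_mul_snapshot]
    simp only [Finset.mul_sum]
    exact Finset.sum_congr rfl fun P _ => Finset.sum_congr rfl fun b _ => by ring
  calc _ = (1 / 3 ^ N : ℂ) * ∑ x, ∑ y, ∑ P : Fin N → Fin 3, ∑ b : Fin N → Fin 2,
        (starRingEnd ℂ) (pvec P b x) * ρ x y * pvec P b y * snapshot (P j) (b j) a a' := by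
        simp only [Matrix.smul_apply, Matrix.sum_apply, smul_eq_mul, wgt, Finset.sum_mul]
        rw [Finset.sum_sum_comm_sum_sum]
        rfl
    _ = ∑ x, ∑ y, ρ x y * if x j = a ∧ y = Function.update x j a' then 1 else 0 := by
        simp only [entry, ← Finset.mul_sum]
        field_simp
    _ = reduced ρ j a a' := by
        simp [reduced, Finset.sum_filter, ite_and, Finset.sum_ite_eq']

/-- Unbiasedness of the local shadow features used as inputs for direct fidelity estimation:
the Born-weighted average of the local inverse snapshots at qubit `j` equals the reduced state,
`(1/3^N)·Σ_P Σ_b w_ρ(P,b)·(3·|e(P_j,b_j)⟩⟨e(P_j,b_j)| − I₂) = ρ^{(j)}`. -/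
theorem local_shadow_unbiased {N : ℕ} (hN : 1 ≤ N) (j : Fin N)
    (ρ : Matrix (Fin N → Fin 2) (Fin N → Fin 2) ℂ) :
    (1 / 3 ^ N : ℂ) • ∑ P : Fin N → Fin 3, ∑ b : Fin N → Fin 2,
      wgt ρ P b • ((3 : ℂ) • outer (evec (P j) (b j)) - 1) = reduced ρ j :=
  local_shadow_unbiased_general j ρ
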